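/- arXiv:1009.4021 — 3 statements merged into one kernel-verified Lean document; each statement's English description precedes it below -/
import Mathlib

section
/- Let d ≥ 0 and 0 ≤ h ≤ d+1 be integers, and let n = C(d+2,2) + h. If g, r₁, r₂ are positive integers with r₁ + r₂ = g, g ≤ d, and n ≤ (C(r₁+2,2) − 1) + (C(r₂+2,2) − 1), then a contradiction follows (i.e., no such r₁, r₂ exist). -/
lemma two_mul_choose_two (m : ℕ) : 2 * (m + 2).choose 2 = (m + 2) * (m + 1) := by
  induction m with
  | zero => rfl
  | succ k ih =>
    have : (k + 3).choose 2 = (k + 2).choose 1 + (k + 2).choose 2 := by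
      rw [show k + 3 = (k + 2) + 1 by ring]
      exact Nat.choose_succ_succ (k + 2) 1
    rw [show k + 1 + 2 = k + 3 by ring, this]
    simp [Nat.choose_one_right] at *
    ring_nf
    ring_nf at ih
    omega

/-- If `n = C(d+2,2) + h` with `0 ≤ h ≤ d+1`, and `g, r₁, r₂` are positive integers with
`r₁ + r₂ = g`, `g ≤ d`, and `n ≤ (C(r₁+2,2) - 1) + (C(r₂+2,2) - 1)`, a contradiction follows. -/
theorem stmt2 (d h n g r₁ r₂ : ℕ) (hh : h ≤ d + 1) (hn : n = (d + 2).choose 2 + h)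
    (hr₁ : 0 < r₁) (hr₂ : 0 < r₂) (hg : r₁ + r₂ = g) (hgd : g ≤ d)
    (hbound : n ≤ ((r₁ + 2).choose 2 - 1) + ((r₂ + 2).choose 2 - 1)) : False := by
  have h1 := two_mul_choose_two r₁
  have h2 := two_mul_choose_two r₂
  have hd := two_mul_choose_two d
  obtain ⟨a, rfl⟩ : ∃ a, r₁ = a + 1 := ⟨r₁ - 1, by omega⟩
  obtain ⟨b, rfl⟩ : ∃ b, r₂ = b + 1 := ⟨r₂ - 1, by omega⟩
  have hc1 : 1 ≤ (a + 1 + 2).choose 2 := by nlinarith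
  have hc2 : 1 ≤ (b + 1 + 2).choose 2 := by nlinarith
  -- multiply hbound through by 2
  have hb2 : n + 2 ≤ (a + 1 + 2).choose 2 + (b + 1 + 2).choose 2 := by omega
  have key : (d + 2) * (d + 1) + 2 * h + 4 ≤ (a + 3) * (a + 2) + (b + 3) * (b + 2) := by
    nlinarith [Nat.mul_le_mul_left 2 hb2, h1, h2, hd, hn]
  have hab : a + b + 2 ≤ d := by omega
  nlinarith [key, hab, Nat.mul_le_mul hab hab]
end

section
/- Let X be a finite set of points in ℙ² such that for every n ≤ |X| all subsets of X of cardinality n have the same Hilbert function (uniform position property). Then for any subset Z ⊆ X with |Z| = n and any i, the Hilbert function satisfies H(Z, i) = min(H(X, i), n). -/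
open MvPolynomial

/-- Evaluation of degree-`l` homogeneous forms on `ℙ²` (given by representatives in `k³`)
at the points of a finite set `X`. -/
noncomputable def evalMapP2 (k : Type) [Field k] (X : Finset (Fin 3 → k)) (l : ℕ) :
    (homogeneousSubmodule (Fin 3) k l) →ₗ[k] (X → k) where
  toFun f x := eval (x : Fin 3 → k) f.1
  map_add' f g := by funext x; simp
  map_smul' c f := by funext x; simp

/-- The Hilbert function of a finite set of points of `ℙ²` (given by representatives in `k³`):
`H(X, l)` is the rank of the evaluation map `H⁰(𝒪_{ℙ²}(l)) → H⁰(𝒪_X(l)) = k^X`. -/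
noncomputable def hilbertFunction (k : Type) [Field k] (X : Finset (Fin 3 → k)) (l : ℕ) : ℕ :=
  Module.finrank k (LinearMap.range (evalMapP2 k X l))

/-- `h⁰(ℙ², I_X(l))`: the dimension of the space of degree-`l` forms vanishing on `X`. -/
noncomputable def h0IdealSheaf (k : Type) [Field k] (X : Finset (Fin 3 → k)) (l : ℕ) : ℕ :=
  Module.finrank k (LinearMap.ker (evalMapP2 k X l))

/-- `h¹(ℙ², I_X(l)) = deg X - H(X, l)`, from the exact sequence
`0 → H⁰(I_X(l)) → H⁰(𝒪(l)) → H⁰(𝒪_X(l)) → H¹(I_X(l)) → H¹(𝒪(l)) = 0`. -/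
noncomputable def h1IdealSheaf (k : Type) [Field k] (X : Finset (Fin 3 → k)) (l : ℕ) : ℕ :=
  X.card - hilbertFunction k X l

/-- The representatives in `X ⊆ k³` give pairwise distinct points of `ℙ²`. -/
def ProjDistinct (k : Type) [Field k] (X : Finset (Fin 3 → k)) : Prop :=
  (∀ x ∈ X, x ≠ 0) ∧ ∀ x ∈ X, ∀ y ∈ X, x ≠ y → ∀ c : k, x ≠ c • y

/-- `X` has the Uniform Position Property: any two subsets of the same cardinality
have the same Hilbert function. -/
def UniformPosition (k : Type) [Field k] (X : Finset (Fin 3 → k)) : Prop :=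
  ∀ Z₁ Z₂ : Finset (Fin 3 → k), Z₁ ⊆ X → Z₂ ⊆ X → Z₁.card = Z₂.card →
    ∀ i, hilbertFunction k Z₁ i = hilbertFunction k Z₂ i

instance (k : Type) [Field k] (i : ℕ) :
    FiniteDimensional k (homogeneousSubmodule (Fin 3) k i) :=
  Submodule.finiteDimensional_of_le (S₂ := restrictTotalDegree (Fin 3) k i)
    (fun p hp => (mem_restrictTotalDegree _ _ _).mpr
      (IsHomogeneous.totalDegree_le ((mem_homogeneousSubmodule _ _).mp hp)))

lemma mem_ker_evalMapP2 (k : Type) [Field k] (Z : Finset (Fin 3 → k)) (i : ℕ)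
    (f : homogeneousSubmodule (Fin 3) k i) :
    f ∈ LinearMap.ker (evalMapP2 k Z i) ↔ ∀ x ∈ Z, eval x f.1 = 0 := by
  constructor
  · intro h x hx
    exact congrFun h (⟨x, hx⟩ : (Z : Set _))
  · intro h; funext x; exact h x x.2

lemma ker_mono (k : Type) [Field k] {Z₁ Z₂ : Finset (Fin 3 → k)} (h : Z₁ ⊆ Z₂) (i : ℕ) :
    LinearMap.ker (evalMapP2 k Z₂ i) ≤ LinearMap.ker (evalMapP2 k Z₁ i) := by
  intro f hf
  rw [mem_ker_evalMapP2] at hf ⊢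
  exact fun x hx => hf x (h hx)

lemma rank_nullity (k : Type) [Field k] (Z : Finset (Fin 3 → k)) (i : ℕ) :
    hilbertFunction k Z i + Module.finrank k (LinearMap.ker (evalMapP2 k Z i))
      = Module.finrank k (homogeneousSubmodule (Fin 3) k i) :=
  LinearMap.finrank_range_add_finrank_ker _

lemma hf_mono (k : Type) [Field k] {Z₁ Z₂ : Finset (Fin 3 → k)} (h : Z₁ ⊆ Z₂) (i : ℕ) :
    hilbertFunction k Z₁ i ≤ hilbertFunction k Z₂ i := by
  have h1 := rank_nullity k Z₁ i
  have h2 := rank_nullity k Z₂ i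
  have := Submodule.finrank_mono (ker_mono k h i)
  omega

lemma hf_le_card (k : Type) [Field k] (Z : Finset (Fin 3 → k)) (i : ℕ) :
    hilbertFunction k Z i ≤ Z.card := by
  have := Submodule.finrank_le (LinearMap.range (evalMapP2 k Z i))
  simpa [hilbertFunction, Module.finrank_fintype_fun_eq_card] using this

lemma exists_subset_card_rank (k : Type) [Field k] (X : Finset (Fin 3 → k)) (i : ℕ) :
    ∀ r, r ≤ hilbertFunction k X i → ∃ S ⊆ X, S.card = r ∧ hilbertFunction k S i = r := by
  intro r
  induction r with
  | zero =>
    intro _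
    exact ⟨∅, Finset.empty_subset _, rfl,
      Nat.le_zero.mp (by simpa using hf_le_card k ∅ i)⟩
  | succ r ih =>
    classical
    intro hr
    obtain ⟨S, hSX, hcard, hrank⟩ := ih (Nat.le_of_succ_le hr)
    have hker_le := ker_mono k hSX i
    have hk1 := rank_nullity k S i
    have hk2 := rank_nullity k X i
    have hne : LinearMap.ker (evalMapP2 k X i) ≠ LinearMap.ker (evalMapP2 k S i) := by
      intro h; rw [h] at hk2; omega
    obtain ⟨f, hfS, hfX⟩ := SetLike.exists_of_lt (lt_of_le_of_ne hker_le hne)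
    rw [mem_ker_evalMapP2] at hfX
    push_neg at hfX
    obtain ⟨x, hxX, hfx⟩ := hfX
    have hxS : x ∉ S := fun hxS => hfx ((mem_ker_evalMapP2 k S i f).mp hfS x hxS)
    refine ⟨insert x S, Finset.insert_subset hxX hSX,
      by rw [Finset.card_insert_of_notMem hxS, hcard], ?_⟩
    have hle : hilbertFunction k (insert x S) i ≤ r + 1 := by
      have := hf_le_card k (insert x S) i
      rwa [Finset.card_insert_of_notMem hxS, hcard] at this
    have hk3 := rank_nullity k (insert x S) i
    have hker_lt : LinearMap.ker (evalMapP2 k (insert x S) i)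
        < LinearMap.ker (evalMapP2 k S i) := by
      refine lt_of_le_of_ne (ker_mono k (Finset.subset_insert x S) i) ?_
      intro h
      have hmem : f ∈ LinearMap.ker (evalMapP2 k (insert x S) i) := h ▸ hfS
      exact hfx ((mem_ker_evalMapP2 k (insert x S) i f).mp hmem x (Finset.mem_insert_self x S))
    have := Submodule.finrank_lt_finrank_of_lt hker_lt
    omega

/-- If `X ⊆ ℙ²` is a finite set of points in uniform position, then the Hilbert function of
any subset `Z ⊆ X` of cardinality `n` is the truncation `H(Z, i) = min (H(X, i)) n`. -/
theorem stmt7 (k : Type) [Field k] [IsAlgClosed k] (X : Finset (Fin 3 → k))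
    (hdist : ProjDistinct k X) (hupp : UniformPosition k X)
    (Z : Finset (Fin 3 → k)) (hZ : Z ⊆ X) (n : ℕ) (hn : Z.card = n) (i : ℕ) :
    hilbertFunction k Z i = min (hilbertFunction k X i) n := by
  subst hn
  rcases le_total (hilbertFunction k X i) Z.card with h | h
  · rw [min_eq_left h]
    obtain ⟨S, hSX, hScard, hSrank⟩ := exists_subset_card_rank k X i _ le_rfl
    obtain ⟨T, hST, hTX, hTcard⟩ :=
      Finset.exists_subsuperset_card_eq hSX (hScard ▸ h) (Finset.card_le_card hZ)
    have h1 : hilbertFunction k T i = hilbertFunction k X i :=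
      le_antisymm (hf_mono k hTX i) (hSrank ▸ hf_mono k hST i)
    rw [hupp Z T hZ hTX hTcard.symm, h1]
  · rw [min_eq_right h]
    obtain ⟨S, hSX, hScard, hSrank⟩ := exists_subset_card_rank k X i Z.card h
    rw [hupp Z S hZ hSX hScard.symm, hSrank]
end

section
/- Let X be a finite set of points in ℙ²_k in uniform position, l a positive integer, and X′ ⊆ X a subset with |X′| = C(l+2,2). If some curve of degree l contains X′, then every curve of degree l containing X′ contains all of X. -/
open MvPolynomial

/-!
Call `i` free over `Z` if every degree-`l` curve through `Z` passes through `i`. If no point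
of `X'` were free over a subset of the others, each point would cut the space of curves by one
dimension, and the `C(l+2,2)` points of `X'` would leave no curve through `X'`. So some
`i ∈ X'` is free over some `Z ⊆ X'`. By rank–nullity, uniform position says that the dimension
of the space of curves through a subset of `X` depends only on its size; hence every point of
`X` is free over every `W ⊆ X` of size `#Z` avoiding it, so also over every larger such `W`, in
particular over `X'`.
-/

open Finset Module

namespace MvPolynomial

instance finite_homogeneousSubmodule (σ R : Type*) [CommSemiring R] [Finite σ] (n : ℕ) :
    Module.Finite R (homogeneousSubmodule σ R n) :=
  Module.Finite.iff_fg.2 (homogeneousSubmodule_fg σ R n)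

theorem finrank_homogeneousSubmodule (σ K : Type*) [Fintype σ] [Field K] (n : ℕ) :
    finrank K (homogeneousSubmodule σ K n) = (Fintype.card σ + n - 1).choose n := by
  classical
  have hsupp : homogeneousSubmodule σ K n = restrictSupport K {d | d.degree = n} :=
    homogeneousSubmodule_eq_finsupp_supported σ K n
  have hdeg :
      {d : σ →₀ ℕ | d.degree = n} = ((univ : Finset σ).finsuppAntidiag n : Set _) := by
    ext d
    simp [Finsupp.degree_eq_sum]
  rw [hsupp, hdeg, finrank_eq_nat_card_basis (basisRestrictSupport K _), Nat.card_coe_set_eq,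
    Set.ncard_coe_finset, card_finsuppAntidiag_nat_eq_choose, card_univ]

end MvPolynomial

section CommonKernel

variable {K V ι : Type*} [Field K] [AddCommGroup V] [Module K V] (φ : ι → Dual K V)

def commonKernel (Z : Finset ι) : Submodule K V :=
  ⨅ i ∈ Z, LinearMap.ker (φ i)

variable {φ}

theorem mem_commonKernel {Z : Finset ι} {v : V} :
    v ∈ commonKernel φ Z ↔ ∀ i ∈ Z, φ i v = 0 := by
  simp [commonKernel, Submodule.mem_iInf]

theorem commonKernel_anti {Z W : Finset ι} (h : Z ⊆ W) :
    commonKernel φ W ≤ commonKernel φ Z :=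
  biInf_mono fun _ hi ↦ h hi

variable [DecidableEq ι] [FiniteDimensional K V]

theorem commonKernel_le_ker_iff_finrank_eq {Z : Finset ι} {i : ι} :
    commonKernel φ Z ≤ LinearMap.ker (φ i) ↔
      finrank K (commonKernel φ (insert i Z)) = finrank K (commonKernel φ Z) := by
  have hins : commonKernel φ (insert i Z) = LinearMap.ker (φ i) ⊓ commonKernel φ Z :=
    Finset.iInf_insert i Z _
  constructor
  · intro h
    rw [hins, inf_eq_right.2 h]
  · intro h
    rw [← Submodule.eq_of_le_of_finrank_eq (commonKernel_anti (subset_insert i Z)) h, hins]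
    exact inf_le_left

theorem finrank_commonKernel_add_card_le {S : Finset ι}
    (hcut : ∀ Z ⊆ S, ∀ i ∈ S, i ∉ Z → ¬ commonKernel φ Z ≤ LinearMap.ker (φ i)) :
    finrank K (commonKernel φ S) + #S ≤ finrank K V := by
  suffices ∀ Z ⊆ S, finrank K (commonKernel φ Z) + #Z ≤ finrank K V from this S subset_rfl
  intro Z
  induction Z using Finset.induction_on with
  | empty => simpa using Submodule.finrank_le (commonKernel φ (∅ : Finset ι))
  | insert i Z hi ih =>
    intro hZS
    have hZ : Z ⊆ S := (subset_insert i Z).trans hZS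
    have hlt : finrank K (commonKernel φ (insert i Z)) < finrank K (commonKernel φ Z) :=
      (Submodule.finrank_mono (commonKernel_anti (subset_insert i Z))).lt_of_ne
        (mt commonKernel_le_ker_iff_finrank_eq.2 (hcut Z hZ i (hZS (mem_insert_self i Z)) hi))
    rw [card_insert_of_notMem hi]
    linarith [ih hZ]

theorem exists_commonKernel_le_ker {S : Finset ι} (hS : finrank K V ≤ #S)
    (hne : commonKernel φ S ≠ ⊥) :
    ∃ Z ⊆ S, ∃ i ∈ S, i ∉ Z ∧ commonKernel φ Z ≤ LinearMap.ker (φ i) := by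
  by_contra! hcut
  have := finrank_commonKernel_add_card_le hcut
  exact hne (Submodule.finrank_eq_zero.1 (by omega))

theorem commonKernel_eq_of_uniform {X X' : Finset ι}
    (hupp : ∀ Z₁ ⊆ X, ∀ Z₂ ⊆ X, #Z₁ = #Z₂ →
      finrank K (commonKernel φ Z₁) = finrank K (commonKernel φ Z₂))
    (hsub : X' ⊆ X) (hcard : finrank K V ≤ #X') (hne : commonKernel φ X' ≠ ⊥) :
    commonKernel φ X = commonKernel φ X' := by
  obtain ⟨Z, hZX', i₀, hi₀X', hi₀Z, hflat⟩ := exists_commonKernel_le_ker hcard hne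
  have hZX : Z ⊆ X := hZX'.trans hsub
  have hfree : ∀ i ∈ X, i ∉ X' → commonKernel φ X' ≤ LinearMap.ker (φ i) := by
    intro i hiX hiX'
    obtain ⟨W, hWX', hWcard⟩ := exists_subset_card_eq (card_le_card hZX')
    have hiW : i ∉ W := fun h ↦ hiX' (hWX' h)
    have hWX : W ⊆ X := hWX'.trans hsub
    refine (commonKernel_anti hWX').trans (commonKernel_le_ker_iff_finrank_eq.2 ?_)
    calc finrank K (commonKernel φ (insert i W))
        = finrank K (commonKernel φ (insert i₀ Z)) :=
          hupp _ (insert_subset hiX hWX) _ (insert_subset (hsub hi₀X') hZX)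
            (by rw [card_insert_of_notMem hiW, card_insert_of_notMem hi₀Z, hWcard])
      _ = finrank K (commonKernel φ Z) := commonKernel_le_ker_iff_finrank_eq.1 hflat
      _ = finrank K (commonKernel φ W) := hupp _ hZX _ hWX hWcard.symm
  refine le_antisymm (commonKernel_anti hsub) fun v hv ↦ mem_commonKernel.2 fun i hiX ↦ ?_
  by_cases hiX' : i ∈ X'
  · exact mem_commonKernel.1 hv i hiX'
  · exact hfree i hiX hiX' hv

end CommonKernel

section PlaneCurves

variable {k : Type} [Field k]

noncomputable def evalForm (l : ℕ) (x : Fin 3 → k) :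
    Dual k (homogeneousSubmodule (Fin 3) k l) :=
  (aeval x).toLinearMap.domRestrict _

theorem mem_commonKernel_evalForm {Z : Finset (Fin 3 → k)} {l : ℕ}
    {f : homogeneousSubmodule (Fin 3) k l} :
    f ∈ commonKernel (evalForm l) Z ↔ ∀ x ∈ Z, eval x (f : MvPolynomial (Fin 3) k) = 0 := by
  simp [mem_commonKernel, evalForm]

theorem ker_evalMapP2 (Z : Finset (Fin 3 → k)) (l : ℕ) :
    LinearMap.ker (evalMapP2 k Z l) = commonKernel (evalForm l) Z := by
  ext f
  simp [mem_commonKernel_evalForm, _root_.funext_iff, evalMapP2]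

theorem UniformPosition.finrank_commonKernel_eq {X : Finset (Fin 3 → k)}
    (hupp : UniformPosition k X) (l : ℕ) {Z₁ Z₂ : Finset (Fin 3 → k)} (h₁ : Z₁ ⊆ X) (h₂ : Z₂ ⊆ X)
    (hcard : #Z₁ = #Z₂) :
    finrank k (commonKernel (evalForm l) Z₁) = finrank k (commonKernel (evalForm l) Z₂) := by
  have hH := hupp Z₁ Z₂ h₁ h₂ hcard l
  have r₁ := LinearMap.finrank_range_add_finrank_ker (evalMapP2 k Z₁ l)
  have r₂ := LinearMap.finrank_range_add_finrank_ker (evalMapP2 k Z₂ l)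
  rw [hilbertFunction, hilbertFunction] at hH
  rw [← ker_evalMapP2, ← ker_evalMapP2]
  omega

end PlaneCurves

open MvPolynomial in
theorem stmt9_general (k : Type) [Field k] (X X' : Finset (Fin 3 → k))
    (hupp : UniformPosition k X)
    (hsub : X' ⊆ X) (l : ℕ) (hcard : X'.card = (l + 2).choose 2)
    (hexists : ∃ f ∈ homogeneousSubmodule (Fin 3) k l, f ≠ 0 ∧ ∀ x ∈ X', eval x f = 0) :
    ∀ f ∈ homogeneousSubmodule (Fin 3) k l, f ≠ 0 →
      (∀ x ∈ X', eval x f = 0) → ∀ x ∈ X, eval x f = 0 := by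
  classical
  intro f hf _ hfX' x hx
  obtain ⟨f₀, hf₀, hf₀ne, hf₀X'⟩ := hexists
  have hdim : finrank k (homogeneousSubmodule (Fin 3) k l) ≤ #X' := by
    rw [finrank_homogeneousSubmodule, hcard, Fintype.card_fin, show 3 + l - 1 = l + 2 by omega,
      Nat.choose_symm_add]
  have hne : commonKernel (evalForm l) X' ≠ ⊥ :=
    (Submodule.ne_bot_iff _).2
      ⟨⟨f₀, hf₀⟩, mem_commonKernel_evalForm.2 hf₀X', by simpa using hf₀ne⟩
  have hX := commonKernel_eq_of_uniform
    (fun _ h₁ _ h₂ ↦ hupp.finrank_commonKernel_eq l h₁ h₂) hsub hdim hne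
  have hfX : (⟨f, hf⟩ : homogeneousSubmodule (Fin 3) k l) ∈ commonKernel (evalForm l) X :=
    hX ▸ mem_commonKernel_evalForm.2 hfX'
  exact mem_commonKernel_evalForm.1 hfX x hx

open MvPolynomial in
/-- If `X ⊆ ℙ²` is in uniform position, `l > 0`, `X' ⊆ X` has cardinality `C(l+2,2)`, and some
curve of degree `l` contains `X'`, then every curve of degree `l` containing `X'` contains `X`. -/
theorem stmt9 (k : Type) [Field k] [IsAlgClosed k] (X X' : Finset (Fin 3 → k))
    (hdist : ProjDistinct k X) (hupp : UniformPosition k X)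
    (hsub : X' ⊆ X) (l : ℕ) (hl : 0 < l) (hcard : X'.card = (l + 2).choose 2)
    (hexists : ∃ f ∈ homogeneousSubmodule (Fin 3) k l, f ≠ 0 ∧ ∀ x ∈ X', eval x f = 0) :
    ∀ f ∈ homogeneousSubmodule (Fin 3) k l, f ≠ 0 →
      (∀ x ∈ X', eval x f = 0) → ∀ x ∈ X, eval x f = 0 :=
  stmt9_general k X X' hupp hsub l hcard hexists
end
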